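/- arXiv:2208.01665 — 3 statements merged into one kernel-verified Lean document; each statement's English description precedes it below -/
import Mathlib

section
/- Let R = ℤ[x,x⁻¹], s(x) = x⁻¹, and B_s = R ⊗_{R^s} R the corresponding Bott–Samelson bimodule. Then B_s is free of rank 2 as a left R-module and as a right R-module, and there is a short exact sequence of (R,R)-bimodules 0 → R_s → B_s → R_e → 0, where R_e = R is the diagonal bimodule and R_s the s-twisted bimodule, with B_s → R_e the multiplication map. -/
set_option synthInstance.maxHeartbeats 1000000
set_option maxHeartbeats 1000000

open LaurentPolynomial TensorProduct

/-- `R = ℤ[x,x⁻¹]`. -/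
noncomputable abbrev R : Type := LaurentPolynomial ℤ

/-- The involution `s : R → R` sending `x` to `x⁻¹`. -/
noncomputable def s : R ≃ₐ[ℤ] R := LaurentPolynomial.invert

/-- The invariant subring `R^s`. -/
noncomputable def Rs : Subalgebra ℤ R := AlgHom.equalizer s.toAlgHom (AlgHom.id ℤ R)

/-- The Bott–Samelson bimodule `B_s = R ⊗_{R^s} R`, a left `R`-module via the
first factor. -/
noncomputable abbrev Bs : Type := TensorProduct Rs R R

/-- The right `R`-action on `B_s`, by multiplication on the second factor. -/
noncomputable def rmul (c : R) : Bs →ₗ[Rs] Bs :=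
  LinearMap.lTensor R (LinearMap.mulLeft Rs c)

/-! ### Auxiliary lemmas -/

lemma mem_Rs_iff {f : R} : f ∈ Rs ↔ invert f = f := Iff.rfl

lemma smul_def' (r : Rs) (f : R) : r • f = ↑r * f := rfl

lemma y_mem : (T (-1) + T 1 : R) ∈ Rs := by
  rw [mem_Rs_iff]; simp [map_add, invert_T, add_comm]

lemma T_mem_span (n : ℤ) : T n ∈ Submodule.span Rs {(1 : R), T 1} := by
  set M := Submodule.span Rs {(1 : R), T 1} with hM
  have h1 : (1 : R) ∈ M := Submodule.subset_span (Set.mem_insert _ _)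
  have hx : (T 1 : R) ∈ M := Submodule.subset_span (Set.mem_insert_of_mem _ rfl)
  have hymul : ∀ b : ℤ, (⟨_, y_mem⟩ : Rs) • (T b : R) = T (b-1) + T (b+1) := by
    intro b
    rw [smul_def']
    push_cast
    rw [add_mul, ← T_add, ← T_add]
    ring_nf
  have hup : ∀ a : ℤ, T a ∈ M → T (a+1) ∈ M → T (a+2) ∈ M := by
    intro a ha ha1
    have : (T (a+2) : R) = (⟨_, y_mem⟩ : Rs) • T (a+1) - T a := by
      rw [hymul]; ring_nf
    rw [this]; exact sub_mem (M.smul_mem _ ha1) ha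
  have hdown : ∀ a : ℤ, T a ∈ M → T (a+1) ∈ M → T (a-1) ∈ M := by
    intro a ha ha1
    have : (T (a-1) : R) = (⟨_, y_mem⟩ : Rs) • T a - T (a+1) := by
      rw [hymul]; ring_nf
    rw [this]; exact sub_mem (M.smul_mem _ ha) ha1
  have key : ∀ n : ℤ, T n ∈ M ∧ T (n+1) ∈ M := by
    intro n
    induction n using Int.induction_on with
    | zero => exact ⟨by rwa [T_zero], by rwa [zero_add]⟩
    | succ i ih =>
      refine ⟨ih.2, ?_⟩
      have := hup i ih.1 ih.2
      rwa [show ((i:ℤ)+2) = (i+1)+1 by ring] at this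
    | pred i ih =>
      refine ⟨?_, ?_⟩
      · exact hdown (-i) ih.1 ih.2
      · rw [show (-(i:ℤ) - 1 + 1) = -(i:ℤ) by ring]
        exact ih.1
  exact (key n).1

lemma span_top : Submodule.span Rs {(1 : R), T 1} = ⊤ := by
  rw [eq_top_iff]
  rintro f -
  induction f using LaurentPolynomial.induction_on' with
  | add p q hp hq => exact add_mem hp hq
  | C_mul_T n a =>
    have : (C a * T n : R) = a • T n := by rw [zsmul_eq_mul]; norm_cast
    rw [this]
    exact zsmul_mem (T_mem_span n) a

lemma T_sub_ne : (T 1 : R) - T (-1) ≠ 0 := by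
  intro h
  rw [sub_eq_zero] at h
  have h1 : (Finsupp.single 1 1 : ℤ →₀ ℤ) = Finsupp.single (-1) 1 := congrArg AddMonoidAlgebra.coeff h
  rw [Finsupp.single_eq_single_iff] at h1
  omega

lemma indep_key (p q : Rs) (h : (p : R) + (q : R) * T 1 = 0) : p = 0 ∧ q = 0 := by
  have hp : invert (p : R) = p := p.2
  have hq : invert (q : R) = q := q.2
  have h2 : (p : R) + (q : R) * T (-1) = 0 := by
    have := congrArg (fun f : R => invert f) h
    simpa [map_add, map_mul, hp, hq, invert_T] using this
  have h3 : (q : R) * (T 1 - T (-1)) = 0 := by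
    have := sub_eq_zero.mpr (h.trans h2.symm)
    ring_nf at this ⊢
    linear_combination this
  have hq0 : (q : R) = 0 := by
    rcases mul_eq_zero.mp h3 with h' | h'
    · exact h'
    · exact absurd h' T_sub_ne
  have hp0 : (p : R) = 0 := by
    rw [hq0, zero_mul, add_zero] at h
    exact h
  exact ⟨Subtype.ext hp0, Subtype.ext hq0⟩

/-- The basis `{1, x}` of `R` over `R^s`. -/
noncomputable def bS : Module.Basis (Fin 2) Rs R :=
  Module.Basis.mk (v := ![1, T 1])
    (by
      rw [Fintype.linearIndependent_iff]
      intro g hg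
      rw [Fin.sum_univ_two] at hg
      simp only [Matrix.cons_val_zero, Matrix.cons_val_one, Matrix.head_cons] at hg
      rw [smul_def', smul_def', mul_one] at hg
      have h := indep_key (g 0) (g 1) hg
      intro i; fin_cases i
      · exact h.1
      · exact h.2)
    (by
      rw [show (Set.range ![(1:R), T 1]) = {1, T 1} by
        ext f; simp [Fin.exists_fin_two]; tauto]
      rw [span_top])

/-- The basis `{1 ⊗ 1, 1 ⊗ x}` of `B_s` as a left `R`-module. -/
noncomputable def bL : Module.Basis (Fin 2) R Bs := bS.baseChange R

lemma bL0 : bL 0 = (1 : R) ⊗ₜ[Rs] (1 : R) := by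
  rw [bL, Module.Basis.baseChange_apply, bS, Module.Basis.mk_apply]
  simp

lemma bL1 : bL 1 = (1 : R) ⊗ₜ[Rs] (T 1) := by
  rw [bL, Module.Basis.baseChange_apply, bS, Module.Basis.mk_apply]
  simp

lemma coords (w : Bs) : ∃! c : R × R, w = c.1 • bL 0 + c.2 • bL 1 := by
  refine ⟨(bL.repr w 0, bL.repr w 1), ?_, ?_⟩
  · have h := bL.sum_repr w
    rw [Fin.sum_univ_two] at h
    exact h.symm
  · rintro ⟨c1, c2⟩ h
    have hr : bL.repr w = c1 • Finsupp.single 0 1 + c2 • Finsupp.single 1 1 := by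
      rw [h, LinearEquiv.map_add, LinearEquiv.map_smul, LinearEquiv.map_smul,
        Module.Basis.repr_self, Module.Basis.repr_self]
    have h0 : bL.repr w 0 = c1 := by
      rw [hr]; simp [Finsupp.single_apply]
    have h1 : bL.repr w 1 = c2 := by
      rw [hr]; simp [Finsupp.single_apply]
    simp [Prod.ext_iff, h0, h1]

lemma tmul_eq_smul (a b : R) : a ⊗ₜ[Rs] b = a • ((1:R) ⊗ₜ[Rs] b) := by
  rw [TensorProduct.smul_tmul', smul_eq_mul, mul_one]

lemma rmul_apply (c a b : R) : rmul c (a ⊗ₜ[Rs] b) = a ⊗ₜ[Rs] (c * b) := by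
  exact rfl

lemma rmul_rmul (b c : R) (z : Bs) : rmul b (rmul c z) = rmul (b * c) z := by
  induction z using TensorProduct.induction_on with
  | zero => rw [LinearMap.map_zero, LinearMap.map_zero, LinearMap.map_zero]
  | tmul u v => rw [rmul_apply, rmul_apply, rmul_apply, mul_assoc]
  | add u v hu hv => rw [LinearMap.map_add, LinearMap.map_add, LinearMap.map_add, hu, hv]

lemma rmul_add_arg (b c : R) (z : Bs) : rmul (b + c) z = rmul b z + rmul c z := by
  induction z using TensorProduct.induction_on with
  | zero => rw [LinearMap.map_zero, LinearMap.map_zero, LinearMap.map_zero, add_zero]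
  | tmul u v => rw [rmul_apply, rmul_apply, rmul_apply, add_mul, tmul_add]
  | add u v hu hv =>
    rw [LinearMap.map_add, LinearMap.map_add, LinearMap.map_add, hu, hv]
    abel

lemma rmul_zsmul (a : ℤ) (c : R) (z : Bs) : rmul (a • c) z = a • rmul c z := by
  induction z using TensorProduct.induction_on with
  | zero => rw [LinearMap.map_zero, LinearMap.map_zero, smul_zero]
  | tmul u v =>
    rw [rmul_apply, rmul_apply, smul_mul_assoc, tmul_smul]
  | add u v hu hv =>
    rw [LinearMap.map_add, LinearMap.map_add, hu, hv, smul_add]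

lemma rmul_one_apply (z : Bs) : rmul 1 z = z := by
  induction z using TensorProduct.induction_on with
  | zero => rw [LinearMap.map_zero]
  | tmul u v => rw [rmul_apply, one_mul]
  | add u v hu hv => rw [LinearMap.map_add, hu, hv]

/-- The twisted inclusion `ι : R_s → B_s`, `m ↦ m ⊗ x - m x ⊗ 1`. -/
noncomputable def iot (m : R) : Bs := m ⊗ₜ[Rs] T 1 - (m * T 1) ⊗ₜ[Rs] 1

lemma iot_add (m n : R) : iot (m + n) = iot m + iot n := by
  simp only [iot, add_mul, add_tmul]
  abel

noncomputable def iotHom : R →+ Bs := AddMonoidHom.mk' iot iot_add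

lemma rmul_iot (c m : R) : rmul c (iot m) = m ⊗ₜ[Rs] (c * T 1) - (m * T 1) ⊗ₜ[Rs] c := by
  simp [iot, map_sub, rmul_apply, mul_one]

lemma key_base (m : R) : iot (m * T (-1)) = rmul (T 1) (iot m) := by
  rw [rmul_iot, iot]
  rw [mul_assoc, ← T_add]
  norm_num
  rw [show (T 1 * T 1 : R) = T 2 from by rw [← T_add]; norm_num]
  rw [sub_eq_sub_iff_add_eq_add]
  calc (m * T (-1)) ⊗ₜ[Rs] T 1 + (m * T 1) ⊗ₜ[Rs] T 1
      = (m * (T (-1) + T 1)) ⊗ₜ[Rs] T 1 := by rw [mul_add, add_tmul]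
    _ = m ⊗ₜ[Rs] ((T (-1) + T 1) * T 1) := by
        rw [show m * (T (-1) + T 1) = (⟨_, y_mem⟩ : Rs) • m from by rw [smul_def']; ring,
          TensorProduct.smul_tmul, smul_def']
    _ = m ⊗ₜ[Rs] T 2 + m ⊗ₜ[Rs] 1 := by
        rw [add_mul, ← T_add, ← T_add]
        norm_num
        rw [tmul_add, add_comm]

lemma key_base' (m : R) : iot (m * T 1) = rmul (T (-1)) (iot m) := by
  have h := key_base (m * T 1)
  rw [mul_assoc, ← T_add] at h
  norm_num at h
  have h2 := congrArg (rmul (T (-1))) h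
  rw [rmul_rmul, ← T_add] at h2
  norm_num at h2
  rw [rmul_one_apply] at h2
  exact h2.symm

lemma key_T (n : ℤ) (m : R) : iot (m * T (-n)) = rmul (T n) (iot m) := by
  induction n using Int.induction_on generalizing m with
  | zero => rw [neg_zero, T_zero, mul_one, rmul_one_apply]
  | succ i ih =>
    have h1 : m * T (-((i:ℤ)+1)) = (m * T (-1)) * T (-(i:ℤ)) := by
      rw [mul_assoc, ← T_add]; ring_nf
    rw [h1, ih, key_base, rmul_rmul, ← T_add]
  | pred i ih =>
    simp only [neg_neg] at ih
    have h1 : m * T (-(-(i:ℤ)-1)) = (m * T 1) * T ((i:ℤ)) := by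
      rw [mul_assoc, ← T_add]; ring_nf
    rw [h1, ih, key_base', rmul_rmul, ← T_add,
      show (-(i:ℤ) + -1) = -(i:ℤ) - 1 by ring]

lemma key_all (b m : R) : iot (m * s b) = rmul b (iot m) := by
  induction b using LaurentPolynomial.induction_on' generalizing m with
  | add p q hp hq =>
    rw [map_add, mul_add, iot_add, hp, hq, rmul_add_arg]
  | C_mul_T n a =>
    have hs : s (C a * T n : R) = a • T (-n) := by
      show invert (C a * T n : R) = a • T (-n)
      rw [map_mul, invert_T, invert_C, zsmul_eq_mul, ← eq_intCast (C : ℤ →+* R) a]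
    have hC : (C a * T n : R) = a • T n := by
      rw [zsmul_eq_mul, ← eq_intCast (C : ℤ →+* R) a]
    rw [hs, hC, mul_smul_comm, rmul_zsmul]
    have : iot (a • (m * T (-n))) = a • iot (m * T (-n)) := map_zsmul iotHom a _
    rw [this, key_T]

lemma part2 : (∃ b₁ b₂ : Bs, ∀ z : Bs, ∃! c : R × R, z = rmul c.1 b₁ + rmul c.2 b₂) := by
  refine ⟨(1 : R) ⊗ₜ[Rs] (1 : R), (T 1) ⊗ₜ[Rs] (1 : R), fun z => ?_⟩
  have comm_comb : ∀ c1 c2 : R,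
      (TensorProduct.comm Rs R R) (rmul c1 ((1:R) ⊗ₜ[Rs] (1:R)) + rmul c2 ((T 1 : R) ⊗ₜ[Rs] (1:R)))
        = c1 • bL 0 + c2 • bL 1 := by
    intro c1 c2
    rw [rmul_apply, rmul_apply, mul_one, mul_one, LinearEquiv.map_add, TensorProduct.comm_tmul,
      TensorProduct.comm_tmul, bL0, bL1, tmul_eq_smul c1 (1:R), tmul_eq_smul c2 (T 1)]
  obtain ⟨c, hc, hu⟩ := coords ((TensorProduct.comm Rs R R) z)
  refine ⟨c, ?_, ?_⟩
  · apply (TensorProduct.comm Rs R R).injective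
    rw [comm_comb c.1 c.2]
    exact hc
  · intro d hd
    apply hu
    rw [hd, comm_comb d.1 d.2]

noncomputable def mu : Bs →+ R := (LinearMap.mul' Rs R).toAddMonoidHom

lemma mu_tmul (a b : R) : mu (a ⊗ₜ[Rs] b) = a * b := by
  show (LinearMap.mul' Rs R) (a ⊗ₜ[Rs] b) = a * b
  exact LinearMap.mul'_apply

lemma iot_zero (m : R) (hm : iotHom m = 0) : m = 0 := by
  have hm' : (0 : Bs) = (-(m * T 1)) • bL 0 + m • bL 1 := by
    rw [bL0, bL1, ← tmul_eq_smul, ← tmul_eq_smul, neg_tmul, neg_add_eq_sub]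
    exact hm.symm.trans (by rw [show iotHom m = iot m from rfl, iot])
  have h0 : (0 : Bs) = (0:R) • bL 0 + (0:R) • bL 1 := by
    rw [zero_smul, zero_smul, add_zero]
  have := ((coords (0 : Bs)).unique (y₁ := (-(m * T 1), m)) (y₂ := ((0:R),(0:R))) hm' h0)
  exact congrArg Prod.snd this

lemma iot_inj : Function.Injective iotHom := by
  intro a b hab
  have h : iotHom (a - b) = 0 := by rw [map_sub, hab, sub_self]
  have := iot_zero _ h
  exact sub_eq_zero.mp this

lemma mu_surj : Function.Surjective mu := by
  intro a
  exact ⟨a ⊗ₜ[Rs] 1, by rw [mu_tmul, mul_one]⟩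

lemma mu_iot (m : R) : mu (iotHom m) = 0 := by
  rw [show iotHom m = iot m from rfl, iot, map_sub, mu_tmul, mu_tmul, mul_one]
  ring

lemma ker_range (z : Bs) : mu z = 0 ↔ z ∈ Set.range iotHom := by
  constructor
  · intro hz
    obtain ⟨⟨a, b⟩, hc, -⟩ := coords z
    have hz2 : a + b * T 1 = 0 := by
      have : mu z = a + b * T 1 := by
        rw [hc, bL0, bL1, ← tmul_eq_smul, ← tmul_eq_smul, map_add, mu_tmul, mu_tmul, mul_one]
      rw [← this]
      exact hz
    refine ⟨b, ?_⟩
    rw [show iotHom b = iot b from rfl, iot, hc, bL0, bL1, ← tmul_eq_smul, ← tmul_eq_smul,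
      show a = -(b * T 1) from by linear_combination hz2, neg_tmul, neg_add_eq_sub]
  · rintro ⟨m, rfl⟩
    exact mu_iot m

lemma iot_lsmul (a m : R) : iotHom (a * m) = a • iotHom m := by
  rw [show iotHom (a * m) = iot (a * m) from rfl, show iotHom m = iot m from rfl, iot, iot,
    smul_sub, TensorProduct.smul_tmul', TensorProduct.smul_tmul', smul_eq_mul, smul_eq_mul,
    mul_assoc]

/-! ### The theorem -/

/-- `B_s = R ⊗_{R^s} R` is free of rank 2 as a left and as a right `R`-module,
and there is a short exact sequence of `(R,R)`-bimodules
`0 → R_s → B_s → R_e → 0` where `B_s → R_e` is the multiplication map,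
`R_e` the diagonal bimodule and `R_s` the `s`-twisted bimodule. -/
theorem bott_samelson_bimodule_ses :
    (∃ _bL : Module.Basis (Fin 2) R Bs, True) ∧
    (∃ b₁ b₂ : Bs, ∀ z : Bs, ∃! c : R × R, z = rmul c.1 b₁ + rmul c.2 b₂) ∧
    (∃ (ι : R →+ Bs) (μ : Bs →+ R),
      (∀ a b : R, μ (a ⊗ₜ[Rs] b) = a * b) ∧
      Function.Injective ι ∧ Function.Surjective μ ∧
      (∀ z : Bs, μ z = 0 ↔ z ∈ Set.range ι) ∧
      (∀ a m : R, ι (a * m) = a • ι m) ∧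
      (∀ b m : R, ι (m * s b) = rmul b (ι m))) :=
  ⟨⟨bL, trivial⟩, part2,
    ⟨iotHom, mu, mu_tmul, iot_inj, mu_surj, ker_range, iot_lsmul, fun b m => key_all b m⟩⟩
end

section
/- With R = ℤ[x,x⁻¹], s(x) = x⁻¹, B_s = R ⊗_{R^s} R, the bimodule B_s ⊗_R B_s is isomorphic to B_s ⊕ B_s as (R,R)-bimodules. -/
open LaurentPolynomial TensorProduct

set_option maxHeartbeats 1000000
set_option synthInstance.maxHeartbeats 400000

/-- `B_s ⊗_R B_s`, computed as `R ⊗_{R^s} R ⊗_{R^s} R`. -/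
noncomputable abbrev BsBs : Type := TensorProduct Rs R Bs

/-- The right `R`-action on `B_s ⊗_R B_s`, on the last factor. -/
noncomputable def rmul' (c : R) : BsBs →ₗ[Rs] BsBs :=
  LinearMap.lTensor R (rmul c)

namespace BSQ

noncomputable def d : R := T 1 - T (-1)

lemma d_ne_zero : d ≠ 0 := by
  rw [d, sub_ne_zero]
  intro h
  have h1 : (T 1 : R).coeff 1 = (T (-1) : R).coeff 1 := by rw [h]
  simp at h1

lemma cancel_d {a b : R} (h : a * d = b * d) : a = b := by
  have h2 : (a - b) * d = 0 := by rw [sub_mul, h, sub_self]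
  rcases mul_eq_zero.mp h2 with h3 | h3
  · exact sub_eq_zero.mp h3
  · exact absurd h3 d_ne_zero

noncomputable def D : ℕ → R
  | 0 => 0
  | n + 1 => T n + D n * T (-1)

lemma D_mul (n : ℕ) : D n * d = T n - T (-(n : ℤ)) := by
  induction n with
  | zero => simp [D]
  | succ n ih =>
    rw [D, add_mul, mul_right_comm, ih]
    simp only [d, mul_sub, sub_mul, ← T_add]
    push_cast
    ring_nf

noncomputable def Dz : ℤ → R := fun n => if 0 ≤ n then D n.toNat else -D (-n).toNat

lemma Dz_mul (n : ℤ) : Dz n * d = T n - T (-n) := by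
  rcases le_or_gt 0 n with h | h
  · rw [Dz, if_pos h]
    have := D_mul n.toNat
    rwa [Int.toNat_of_nonneg h] at this
  · rw [Dz, if_neg (not_le.mpr h)]
    have := D_mul (-n).toNat
    rw [Int.toNat_of_nonneg (by omega)] at this
    rw [neg_mul, this]
    ring

noncomputable def derL : (ℤ →₀ ℤ) →ₗ[ℤ] R :=
  Finsupp.lsum ℤ fun n => LinearMap.toSpanSingleton ℤ R (Dz n)

noncomputable def der (f : R) : R := derL f.coeff

lemma der_single (n c : ℤ) : der (AddMonoidAlgebra.single n c : R) = c • Dz n := by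
  rw [der, derL, AddMonoidAlgebra.coeff_single]
  erw [Finsupp.lsum_single]
  rw [LinearMap.toSpanSingleton_apply]

lemma single_eq_smul_T (n c : ℤ) : (AddMonoidAlgebra.single n c : R) = c • T n := by
  simp

lemma der_spec (f : R) : der f * d = f - invert f := by
  induction f using AddMonoidAlgebra.induction_linear with
  | zero => simp [der]
  | add f g hf hg =>
    have : der (f + g) = der f + der g := by simp only [der, AddMonoidAlgebra.coeff_add, map_add]
    rw [this, add_mul, hf, hg, map_add]
    ring
  | single n c =>
    rw [der_single, single_eq_smul_T, smul_mul_assoc, Dz_mul, map_smul, invert_T, smul_sub]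

end BSQ

namespace BSQ2
open BSQ

lemma mem_Rs {f : R} (h : invert f = f) : f ∈ Rs := h

lemma invert_d : invert (d : R) = -d := by
  simp [d]

lemma der_invert (f : R) : invert (der f) = der f := by
  apply cancel_d
  rw [der_spec]
  have h := congrArg (invert : R → R) (der_spec f)
  rw [map_mul, invert_d, map_sub, LaurentPolynomial.involutive_invert f] at h
  -- h : invert (der f) * -d = invert f - f
  have := congrArg Neg.neg h
  rw [← mul_neg, neg_neg, neg_sub] at this
  exact this

lemma der_smul' (a f : R) (ha : invert a = a) : der (a * f) = a * der f := by
  apply cancel_d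
  rw [der_spec, map_mul, ha, mul_assoc, der_spec, mul_sub]

noncomputable def P (f : R) : R := f - der f * T 1

lemma P_invert (f : R) : invert (P f) = P f := by
  rw [P, map_sub, map_mul, der_invert, invert_T]
  have h : invert f = f - der f * d := by
    rw [der_spec]; ring
  rw [h, d]
  ring

lemma P_add_mul (f : R) : P f + der f * T 1 = f := by rw [P]; ring

lemma der_one : der (1 : R) = 0 := by
  have h : (1 : R) = AddMonoidAlgebra.single 0 1 := rfl
  rw [h, der_single]
  simp [Dz, D]

lemma der_T_one : der (T 1 : R) = 1 := by
  have h : (T 1 : R) = AddMonoidAlgebra.single 1 1 := rfl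
  rw [h, der_single]
  norm_num [Dz]
  show D 1 = 1
  rw [D, D]
  simp

lemma P_one : P 1 = 1 := by rw [P, der_one]; ring
lemma P_T_one : P (T 1) = 0 := by rw [P, der_T_one]; ring

noncomputable def Pl : R →ₗ[Rs] R where
  toFun := P
  map_add' f g := by
    simp only [P, der]
    rw [AddMonoidAlgebra.coeff_add, map_add]
    ring
  map_smul' a f := by
    simp only [Subalgebra.smul_def, smul_eq_mul, RingHom.id_apply, P]
    rw [der_smul' _ _ a.2]
    ring

noncomputable def Ql : R →ₗ[Rs] R where
  toFun := der
  map_add' f g := by simp only [der, AddMonoidAlgebra.coeff_add, map_add]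
  map_smul' a f := by
    simp only [Subalgebra.smul_def, smul_eq_mul, RingHom.id_apply]
    rw [der_smul' _ _ a.2]

noncomputable def Bmap : R →ₗ[Rs] R →ₗ[Rs] R × R where
  toFun f := LinearMap.prod (LinearMap.mulLeft Rs (Pl f)) (LinearMap.mulLeft Rs (Ql f))
  map_add' f g := by
    ext b <;>
      simp [map_add, add_mul]
  map_smul' a f := by
    have hP : P ((a : R) * f) = (a : R) * P f := by
      rw [P, P, der_smul' _ _ a.2]; ring
    have hQ : der ((a : R) * f) = (a : R) * der f := der_smul' _ _ a.2
    refine LinearMap.ext fun b => Prod.ext ?_ ?_ <;>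
      simp only [LinearMap.prod_apply, Pi.prod, LinearMap.mulLeft_apply, RingHom.id_apply,
        LinearMap.smul_apply, Prod.smul_fst, Prod.smul_snd,
        Subalgebra.smul_def, smul_eq_mul]
    · show P ((a : R) * f) * b = (a : R) * (P f * b)
      rw [hP]; ring
    · show der ((a : R) * f) * b = (a : R) * (der f * b)
      rw [hQ]; ring

end BSQ2

namespace BSQ3
open BSQ BSQ2

noncomputable def e2lin : Bs →ₗ[Rs] R × R := TensorProduct.lift Bmap

noncomputable def i2 : R × R →ₗ[Rs] Bs :=
  LinearMap.coprod (TensorProduct.mk Rs R R 1) (TensorProduct.mk Rs R R (T 1))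

lemma e2lin_tmul (f b : R) : e2lin (f ⊗ₜ[Rs] b) = (P f * b, der f * b) := rfl

lemma tmul_mul (g : R) (hg : g ∈ Rs) (c b : R) :
    c ⊗ₜ[Rs] (g * b) = (g * c) ⊗ₜ[Rs] (b : R) := by
  have h1 : g * b = (⟨g, hg⟩ : Rs) • b := by rw [Subalgebra.smul_def, smul_eq_mul]
  have h2 : g * c = (⟨g, hg⟩ : Rs) • c := by rw [Subalgebra.smul_def, smul_eq_mul]
  rw [h1, h2, TensorProduct.tmul_smul, TensorProduct.smul_tmul']

noncomputable def e2 : Bs ≃ₗ[Rs] R × R := by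
  refine LinearEquiv.ofLinear e2lin i2 ?_ ?_
  · refine LinearMap.ext fun p => ?_
    obtain ⟨b, c⟩ := p
    show e2lin ((1 : R) ⊗ₜ[Rs] b + (T 1 : R) ⊗ₜ[Rs] c) = (b, c)
    simp only [LinearMap.comp_apply, i2, LinearMap.coprod_apply, TensorProduct.mk_apply,
      map_add, e2lin_tmul, P_one, der_one, P_T_one, der_T_one, LinearMap.id_apply]
    simp [Prod.ext_iff]
  · refine TensorProduct.ext' fun f b => ?_
    show (1 : R) ⊗ₜ[Rs] (P f * b) + (T 1 : R) ⊗ₜ[Rs] (der f * b) = f ⊗ₜ[Rs] b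
    rw [tmul_mul (P f) (P_invert f) _ b, tmul_mul (der f) (der_invert f) _ b]
    rw [← TensorProduct.add_tmul]
    congr 1
    rw [mul_one, mul_comm (der f) (T 1)]
    have := P_add_mul f
    rw [mul_comm (der f) (T 1)] at this
    exact this

lemma e2_tmul (f b : R) : e2 (f ⊗ₜ[Rs] b) = (P f * b, der f * b) := rfl

noncomputable def E : BsBs ≃ₗ[Rs] Bs × Bs :=
  (TensorProduct.congr (LinearEquiv.refl Rs R) e2).trans (TensorProduct.prodRight Rs Rs R R R)

lemma E_tmul (a : R) (w : Bs) :
    E (a ⊗ₜ[Rs] w) = (a ⊗ₜ[Rs] (e2 w).1, a ⊗ₜ[Rs] (e2 w).2) := rfl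

lemma E_smul (r : R) (z : BsBs) : E (r • z) = r • E z := by
  induction z using TensorProduct.induction_on with
  | zero => simp
  | add x y hx hy => rw [smul_add, map_add, hx, hy, map_add, smul_add]
  | tmul a w =>
    rw [TensorProduct.smul_tmul', smul_eq_mul, E_tmul, E_tmul, Prod.smul_mk,
      TensorProduct.smul_tmul', TensorProduct.smul_tmul', smul_eq_mul]

noncomputable def eR : BsBs ≃ₗ[R] Bs × Bs where
  toFun := E
  map_add' := map_add E
  map_smul' := E_smul
  invFun := E.symm
  left_inv := E.left_inv
  right_inv := E.right_inv

lemma rmul_tmul (r a b : R) : rmul r (a ⊗ₜ[Rs] b) = a ⊗ₜ[Rs] (r * b) := rfl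

lemma e2_rmul (r : R) (w : Bs) : e2 (rmul r w) = (r * (e2 w).1, r * (e2 w).2) := by
  induction w using TensorProduct.induction_on with
  | zero => simp; rfl
  | add x y hx hy =>
    rw [map_add, map_add, hx, hy, map_add]
    simp only [Prod.fst_add, Prod.snd_add, mul_add, Prod.mk_add_mk]
  | tmul f b =>
    rw [rmul_tmul, e2_tmul, e2_tmul]
    simp only [Prod.mk.injEq]
    constructor <;> ring

end BSQ3

/-- `B_s ⊗_R B_s ≅ B_s ⊕ B_s` as `(R,R)`-bimodules: there is a left `R`-linear
isomorphism intertwining the right `R`-actions. -/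
theorem bott_samelson_square :
    ∃ e : BsBs ≃ₗ[R] Bs × Bs,
      ∀ (r : R) (z : BsBs),
        e (rmul' r z) = (rmul r (e z).1, rmul r (e z).2) := by
  refine ⟨BSQ3.eR, fun r z => ?_⟩
  induction z using TensorProduct.induction_on with
  | zero => simp [map_zero]; rfl
  | add x y hx hy =>
    rw [map_add, map_add, map_add, hx, hy]
    simp only [Prod.fst_add, Prod.snd_add, map_add, Prod.mk_add_mk]
  | tmul a w =>
    have h1 : rmul' r (a ⊗ₜ[Rs] w) = a ⊗ₜ[Rs] (rmul r w) := rfl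
    rw [h1]
    show BSQ3.E (a ⊗ₜ[Rs] rmul r w) = _
    rw [BSQ3.E_tmul, BSQ3.e2_rmul]
    rw [show BSQ3.eR (a ⊗ₜ[Rs] w) = BSQ3.E (a ⊗ₜ[Rs] w) from rfl, BSQ3.E_tmul]
    rfl
end

section
/- Let W = S₂ act on R = ℤ[x^{±1}, y^{±1}] by swapping x and y. Then the invariant ring R^W equals ℤ[e₁, e₂^{±1}] where e₁ = x + y and e₂ = xy, and R is free of rank 2 over R^W with basis {1, x}. -/
/-- `R = ℤ[x^{±1}, y^{±1}]`, the group algebra of `ℤ × ℤ`, with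
`x = e^{(1,0)}`, `y = e^{(0,1)}`. -/
noncomputable abbrev R2 : Type := AddMonoidAlgebra ℤ (ℤ × ℤ)

/-- The action of the nontrivial element of `W = S₂`, swapping `x` and `y`. -/
noncomputable def σ : R2 ≃ₐ[ℤ] R2 :=
  AddMonoidAlgebra.domCongr ℤ ℤ (AddEquiv.prodComm (M := ℤ) (N := ℤ))

/-- The invariant subring `R^W` of symmetric Laurent polynomials. -/
noncomputable def RW : Subalgebra ℤ R2 := AlgHom.equalizer σ.toAlgHom (AlgHom.id ℤ R2)

/-- `x`. -/
noncomputable def X : R2 := AddMonoidAlgebra.single (1, 0) 1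
/-- `y`. -/
noncomputable def Y : R2 := AddMonoidAlgebra.single (0, 1) 1
/-- `e₂ = xy`. -/
noncomputable def e₂ : R2 := AddMonoidAlgebra.single (1, 1) 1
/-- `e₂⁻¹ = (xy)⁻¹`. -/
noncomputable def e₂inv : R2 := AddMonoidAlgebra.single (-1, -1) 1

open AddMonoidAlgebra

lemma sigma_single (a b : ℤ) (c : ℤ) : σ (single (a, b) c) = single (b, a) c := by
  simp [σ, AddMonoidAlgebra.domCongr_single]

lemma sigma_X : σ X = Y := by simp [X, Y, sigma_single]
lemma sigma_Y : σ Y = X := by simp [X, Y, sigma_single]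
lemma sigma_e₂ : σ e₂ = e₂ := by rw [e₂, sigma_single]
lemma sigma_e₂inv : σ e₂inv = e₂inv := by simp [e₂inv, sigma_single]

lemma mem_RW_iff (r : R2) : r ∈ RW ↔ σ r = r := by
  simp [RW, AlgHom.mem_equalizer]

lemma X_sq : X * X = (X + Y) * X - e₂ := by
  rw [add_mul, X, Y, e₂, single_mul_single, single_mul_single]
  norm_num

noncomputable def A : Subalgebra ℤ R2 := Algebra.adjoin ℤ {X + Y, e₂, e₂inv}

lemma e₁_mem : X + Y ∈ A := Algebra.subset_adjoin (by simp)
lemma e₂_mem : e₂ ∈ A := Algebra.subset_adjoin (by simp)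
lemma e₂inv_mem : e₂inv ∈ A := Algebra.subset_adjoin (by simp)

def P (r : R2) : Prop := ∃ f g : R2, f ∈ A ∧ g ∈ A ∧ r = f + g * X

lemma P_add {r s : R2} (hr : P r) (hs : P s) : P (r + s) := by
  obtain ⟨f, g, hf, hg, rfl⟩ := hr
  obtain ⟨f', g', hf', hg', rfl⟩ := hs
  exact ⟨f + f', g + g', add_mem hf hf', add_mem hg hg', by ring⟩

lemma P_mul {r s : R2} (hr : P r) (hs : P s) : P (r * s) := by
  obtain ⟨f, g, hf, hg, rfl⟩ := hr
  obtain ⟨f', g', hf', hg', rfl⟩ := hs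
  refine ⟨f * f' - g * g' * e₂, f * g' + g * f' + g * g' * (X + Y),
    sub_mem (mul_mem hf hf') (mul_mem (mul_mem hg hg') e₂_mem),
    add_mem (add_mem (mul_mem hf hg') (mul_mem hg hf')) (mul_mem (mul_mem hg hg') e₁_mem), ?_⟩
  linear_combination (g * g') * X_sq

lemma P_one : P 1 := ⟨1, 0, one_mem A, zero_mem A, by ring⟩

lemma P_X : P X := ⟨0, 1, zero_mem A, one_mem A, by ring⟩

lemma P_Y : P Y := ⟨X + Y, -1, e₁_mem, neg_mem (one_mem A), by ring⟩

lemma P_Xinv : P (single (-1, 0) 1) := by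
  refine ⟨e₂inv * (X + Y), -e₂inv, mul_mem e₂inv_mem e₁_mem, neg_mem e₂inv_mem, ?_⟩
  have h : e₂inv * Y = single ((-1 : ℤ), (0 : ℤ)) (1 : ℤ) := by
    rw [e₂inv, Y, single_mul_single]; norm_num
  linear_combination -h

lemma P_Yinv : P (single (0, -1) 1) := by
  refine ⟨0, e₂inv, zero_mem A, e₂inv_mem, ?_⟩
  have h : e₂inv * X = single ((0 : ℤ), (-1 : ℤ)) (1 : ℤ) := by
    rw [e₂inv, X, single_mul_single]; norm_num
  linear_combination -h

lemma P_Xpow (a : ℤ) : P (single (a, 0) 1) := by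
  induction a using Int.induction_on with
  | zero => simpa [AddMonoidAlgebra.one_def, Prod.mk_zero_zero] using P_one
  | succ n ih =>
    have : single ((n : ℤ) + 1, (0 : ℤ)) (1 : ℤ) = single ((n : ℤ), (0 : ℤ)) 1 * X := by
      rw [X, single_mul_single]; norm_num
    rw [this]; exact P_mul ih P_X
  | pred n ih =>
    have : single (-(n : ℤ) - 1, (0 : ℤ)) (1 : ℤ)
        = single (-(n : ℤ), (0 : ℤ)) 1 * single ((-1 : ℤ), (0 : ℤ)) 1 := by
      rw [single_mul_single]; norm_num [sub_eq_add_neg]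
    rw [this]; exact P_mul ih P_Xinv

lemma P_Ypow (b : ℤ) : P (single (0, b) 1) := by
  induction b using Int.induction_on with
  | zero => simpa [AddMonoidAlgebra.one_def, Prod.mk_zero_zero] using P_one
  | succ n ih =>
    have : single ((0 : ℤ), (n : ℤ) + 1) (1 : ℤ) = single ((0 : ℤ), (n : ℤ)) 1 * Y := by
      rw [Y, single_mul_single]; norm_num
    rw [this]; exact P_mul ih P_Y
  | pred n ih =>
    have : single ((0 : ℤ), -(n : ℤ) - 1) (1 : ℤ)
        = single ((0 : ℤ), -(n : ℤ)) 1 * single ((0 : ℤ), (-1 : ℤ)) 1 := by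
      rw [single_mul_single]; norm_num [sub_eq_add_neg]
    rw [this]; exact P_mul ih P_Yinv

lemma P_single (a b c : ℤ) : P (single (a, b) c) := by
  have h : single ((a : ℤ), (b : ℤ)) c
      = single ((0 : ℤ), (0 : ℤ)) c * (single (a, (0 : ℤ)) 1 * single ((0 : ℤ), b) 1) := by
    rw [single_mul_single, single_mul_single]; norm_num
  have hc : P (single ((0 : ℤ), (0 : ℤ)) c) := by
    refine ⟨single (0, 0) c, 0, ?_, zero_mem A, by ring⟩
    have : single ((0 : ℤ), (0 : ℤ)) c = c • (1 : R2) := by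
      rw [AddMonoidAlgebra.one_def, AddMonoidAlgebra.smul_single', mul_one]
      rfl
    rw [this]; exact Subalgebra.smul_mem A (one_mem A) c
  rw [h]
  exact P_mul hc (P_mul (P_Xpow a) (P_Ypow b))

lemma P_all (r : R2) : P r := by
  induction r using AddMonoidAlgebra.induction_linear with
  | zero => exact ⟨0, 0, zero_mem A, zero_mem A, by ring⟩
  | add f g hf hg => exact P_add hf hg
  | single a b => exact P_single a.1 a.2 b

lemma X_sub_Y_ne : X - Y ≠ 0 := by
  rw [sub_ne_zero, X, Y]
  intro h
  have := AddMonoidAlgebra.single_inj.mp h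
  simp at this

lemma unique_decomp {f g : R2} (hf : σ f = f) (hg : σ g = g) (h : f + g * X = 0) :
    f = 0 ∧ g = 0 := by
  have h2 : f + g * Y = 0 := by
    have := congrArg σ h
    simpa [map_add, map_mul, hf, hg, sigma_X] using this
  have hgz : g * (X - Y) = 0 := by linear_combination h - h2
  rcases mul_eq_zero.mp hgz with hg0 | hXY
  · constructor
    · simpa [hg0] using h
    · exact hg0
  · exact absurd hXY X_sub_Y_ne

lemma A_le_RW : A ≤ RW := by
  apply Algebra.adjoin_le
  intro r hr
  rw [SetLike.mem_coe, mem_RW_iff]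
  rcases hr with h | h | h
  · subst h; rw [map_add, sigma_X, sigma_Y, add_comm]
  · subst h; exact sigma_e₂
  · subst h; exact sigma_e₂inv

/-- For `GL₂`: the invariant ring of `R = ℤ[x^{±1}, y^{±1}]` under the swap
action of `S₂` is `ℤ[e₁, e₂^{±1}]` with `e₁ = x + y`, `e₂ = xy`, and `R` is
free of rank 2 over `R^W` with basis `{1, x}`. -/
theorem gl2_invariants_and_freeness :
    e₂ * e₂inv = 1 ∧
    RW = Algebra.adjoin ℤ {X + Y, e₂, e₂inv} ∧
    ∃ b : Module.Basis (Fin 2) RW R2, b 0 = 1 ∧ b 1 = X := by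
  refine ⟨?_, ?_, ?_⟩
  · rw [e₂, e₂inv, single_mul_single]
    have h1 : ((1 : ℤ), (1 : ℤ)) + ((-1 : ℤ), (-1 : ℤ)) = (0 : ℤ × ℤ) := rfl
    rw [h1, mul_one]
    exact AddMonoidAlgebra.one_def.symm
  · refine le_antisymm ?_ A_le_RW
    intro r hr
    obtain ⟨f, g, hf, hg, rfl⟩ := P_all r
    have hσf : σ f = f := (mem_RW_iff f).mp (A_le_RW hf)
    have hσg : σ g = g := (mem_RW_iff g).mp (A_le_RW hg)
    have hr' : σ (f + g * X) = f + g * X := (mem_RW_iff _).mp hr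
    have h2 : f + g * Y = f + g * X := by
      rw [← hr', map_add, map_mul, hσf, hσg, sigma_X]
    have hgz : g * (X - Y) = 0 := by linear_combination -h2
    rcases mul_eq_zero.mp hgz with hg0 | hXY
    · rw [hg0, zero_mul, add_zero]; exact hf
    · exact absurd hXY X_sub_Y_ne
  · set v : Fin 2 → R2 := ![1, X] with hv
    have hsmul : ∀ (c : RW) (r : R2), c • r = (c : R2) * r := fun c r => rfl
    have hli : LinearIndependent RW v := by
      rw [Fintype.linearIndependent_iff]
      intro c hc
      rw [Fin.sum_univ_two] at hc
      simp only [hv, Matrix.cons_val_zero, Matrix.cons_val_one, Matrix.head_cons] at hc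
      have hc' : (c 0 : R2) + (c 1 : R2) * X = 0 := by
        rw [hsmul, hsmul, mul_one] at hc; exact hc
      have h0 := unique_decomp ((mem_RW_iff _).mp (c 0).2) ((mem_RW_iff _).mp (c 1).2) hc'
      intro i
      fin_cases i
      · exact Subtype.ext h0.1
      · exact Subtype.ext h0.2
    have hsp : ⊤ ≤ Submodule.span RW (Set.range v) := by
      intro r _
      obtain ⟨f, g, hf, hg, rfl⟩ := P_all r
      have h1 : (1 : R2) ∈ Submodule.span RW (Set.range v) :=
        Submodule.subset_span ⟨0, rfl⟩
      have hX : X ∈ Submodule.span RW (Set.range v) :=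
        Submodule.subset_span ⟨1, rfl⟩
      have : f + g * X = (⟨f, A_le_RW hf⟩ : RW) • (1 : R2) + (⟨g, A_le_RW hg⟩ : RW) • X := by
        rw [hsmul, hsmul, mul_one]
      rw [this]
      exact Submodule.add_mem _ (Submodule.smul_mem _ _ h1) (Submodule.smul_mem _ _ hX)
    refine ⟨Module.Basis.mk hli hsp, ?_, ?_⟩
    · rw [Module.Basis.mk_apply]; rfl
    · rw [Module.Basis.mk_apply]; rfl
end
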